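/- arXiv:1405.0713 — 2 statements merged into one kernel-verified Lean document; each statement's English description precedes it below -/
import Mathlib

section
/- Let G be a κ-minimal graph with κ ≥ Δ(G) + 1. If v₀ is a 2-vertex of G (a vertex of degree exactly 2), then v₀ is contained in a triangle of G. -/
open SimpleGraph

universe u₁ u₂

/-- The degree of a vertex `x` in a graph `G` (number of neighbors). -/
noncomputable def vdeg {V : Type u₁} (G : SimpleGraph V) (x : V) : ℕ :=
  (G.neighborSet x).ncard

/-- The maximum degree `Δ(G)` of a graph `G`. -/
noncomputable def maxDeg {V : Type u₁} (G : SimpleGraph V) : ℕ :=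
  sSup (Set.range (vdeg G))

/-- A proper edge coloring: distinct edges of `G` sharing an endpoint get distinct colors. -/
def IsProperEdgeColoring {V : Type u₁} (G : SimpleGraph V) (φ : Sym2 V → ℕ) : Prop :=
  ∀ e₁ ∈ G.edgeSet, ∀ e₂ ∈ G.edgeSet, e₁ ≠ e₂ → (∃ x : V, x ∈ e₁ ∧ x ∈ e₂) → φ e₁ ≠ φ e₂

/-- An acyclic edge coloring: a proper edge coloring in which every cycle receives
at least three colors. -/
def IsAcyclicEdgeColoring {V : Type u₁} (G : SimpleGraph V) (φ : Sym2 V → ℕ) : Prop :=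
  IsProperEdgeColoring G φ ∧
    ∀ (x : V) (c : G.Walk x x), c.IsCycle → 3 ≤ (c.edges.map φ).toFinset.card

/-- The acyclic chromatic index `χ'ₐ(G)`: the least number of colors in an acyclic
edge coloring of `G`. -/
noncomputable def acyclicChromaticIndex {V : Type u₁} (G : SimpleGraph V) : ℕ :=
  sInf {n : ℕ | ∃ φ : Sym2 V → ℕ, IsAcyclicEdgeColoring G φ ∧ ∀ e ∈ G.edgeSet, φ e < n}

/-- A graph `G` with maximum degree at most `κ` is `κ`-deletion-minimal if
`χ'ₐ(G) > κ` while `χ'ₐ(H) ≤ κ` for every proper subgraph `H` of `G`. -/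
def DeletionMinimal {V : Type u₁} (G : SimpleGraph V) (κ : ℕ) : Prop :=
  maxDeg G ≤ κ ∧ κ < acyclicChromaticIndex G ∧
    ∀ H : SimpleGraph V, H < G → acyclicChromaticIndex H ≤ κ

/-- `H` is a minor of `G`: there are nonempty, pairwise disjoint, connected branch sets
in `G`, one for each vertex of `H`, with an edge of `G` between the branch sets of any
two adjacent vertices of `H`. -/
def IsMinor {W : Type u₂} {V : Type u₁} (H : SimpleGraph W) (G : SimpleGraph V) : Prop :=
  ∃ B : W → Set V,
    (∀ w, (B w).Nonempty) ∧
    (∀ w, (G.induce (B w)).Connected) ∧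
    (∀ w₁ w₂, w₁ ≠ w₂ → Disjoint (B w₁) (B w₂)) ∧
    ∀ w₁ w₂, H.Adj w₁ w₂ → ∃ v₁ ∈ B w₁, ∃ v₂ ∈ B w₂, G.Adj v₁ v₂

/-- A proper minor of `G`: a minor which is not isomorphic to `G`. -/
def IsProperMinor {W : Type u₂} {V : Type u₁} (H : SimpleGraph W) (G : SimpleGraph V) : Prop :=
  IsMinor H G ∧ ¬ Nonempty (H ≃g G)

/-- A graph `G` with maximum degree at most `κ` is `κ`-minimal if `χ'ₐ(G) > κ` while
`χ'ₐ(H) ≤ κ` for every proper minor `H` of `G` with `Δ(H) ≤ Δ(G)`. -/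
def KMinimal {V : Type u₁} (G : SimpleGraph V) (κ : ℕ) : Prop :=
  maxDeg G ≤ κ ∧ κ < acyclicChromaticIndex G ∧
    ∀ (W : Type u₁) (H : SimpleGraph W),
      IsProperMinor H G → maxDeg H ≤ maxDeg G → acyclicChromaticIndex H ≤ κ

/-- Planarity, characterized combinatorially (Wagner's theorem): a graph is planar iff
it has neither a `K₅` minor nor a `K₃,₃` minor. -/
def IsPlanar {V : Type u₁} (G : SimpleGraph V) : Prop :=
  ¬ IsMinor (completeGraph (Fin 5)) G ∧
    ¬ IsMinor (completeBipartiteGraph (Fin 3) (Fin 3)) G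

/-- `G` is 2-connected: it is connected, has at least three vertices, and removing
any single vertex leaves it connected. -/
def TwoConnected {V : Type u₁} (G : SimpleGraph V) : Prop :=
  G.Connected ∧ 3 ≤ Nat.card V ∧ ∀ x : V, (G.induce {y : V | y ≠ x}).Connected

/-- A path of `H` whose edges are all colored `α` or `β` and alternate. -/
def IsAltPath {V : Type u₁} (H : SimpleGraph V) (φ : Sym2 V → ℕ) (α β : ℕ)
    {x y : V} (p : H.Walk x y) : Prop :=
  p.IsPath ∧ (∀ e ∈ p.edges, φ e = α ∨ φ e = β) ∧
    p.edges.Chain' fun e₁ e₂ => φ e₁ ≠ φ e₂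

/-- A maximal `(α, β)`-dichromatic path: an alternating path that is not properly
contained in any other alternating path. -/
def IsMaxAltPath {V : Type u₁} (H : SimpleGraph V) (φ : Sym2 V → ℕ) (α β : ℕ)
    {x y : V} (p : H.Walk x y) : Prop :=
  IsAltPath H φ α β p ∧
    ∀ {x' y' : V} (q : H.Walk x' y'), IsAltPath H φ α β q →
      (∀ z ∈ p.support, z ∈ q.support) → (∀ e ∈ p.edges, e ∈ q.edges) →
      ∀ e ∈ q.edges, e ∈ p.edges

/-! If the two neighbours `u`, `w` of `v₀` were not adjacent, contracting `v₀w` would give the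
proper minor `H = (G + uw) - v₀` with `Δ(H) ≤ Δ(G)`, hence an acyclic edge colouring `φ` of `H`
with `κ` colours. Colour `v₀u` like `uw`, `v₀w` with a colour missing at `w` in `H` (one exists
since `deg_H w ≤ Δ(G) < κ`), and every other edge as in `H`. A cycle of `G` avoiding `v₀` is a
cycle of `H`; a cycle through `v₀` is `u v₀ w` closed by a `w`–`u` path, and replacing `u v₀ w`
by the edge `uw` gives a cycle of `H` with no more colours. So `χ'ₐ(G) ≤ κ`, a contradiction. -/

section Basic

variable {V : Type u₁}

lemma isProperEdgeColoring_iff_injOn {G : SimpleGraph V} {φ : Sym2 V → ℕ} :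
    IsProperEdgeColoring G φ ↔ ∀ x, Set.InjOn φ (G.incidenceSet x) :=
  ⟨fun h x _ he₁ _ he₂ hφ => by_contra fun hne => h _ he₁.1 _ he₂.1 hne ⟨x, he₁.2, he₂.2⟩ hφ,
    fun h _ he₁ _ he₂ hne ⟨x, hx₁, hx₂⟩ hφ => hne (h x ⟨he₁, hx₁⟩ ⟨he₂, hx₂⟩ hφ)⟩

lemma isAcyclicEdgeColoring_of_injective (G : SimpleGraph V) {φ : Sym2 V → ℕ}
    (hφ : Function.Injective φ) : IsAcyclicEdgeColoring G φ := by
  refine ⟨fun _ _ _ _ hne _ => hφ.ne hne, fun x c hc => ?_⟩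
  rw [List.toFinset_card_of_nodup (hc.edges_nodup.map hφ), List.length_map, Walk.length_edges]
  exact hc.three_le_length

lemma exists_isAcyclicEdgeColoring_lt_acyclicChromaticIndex [Finite V] (G : SimpleGraph V) :
    ∃ φ, IsAcyclicEdgeColoring G φ ∧ ∀ e ∈ G.edgeSet, φ e < acyclicChromaticIndex G := by
  obtain ⟨n, ⟨eqv⟩⟩ := Finite.exists_equiv_fin (Sym2 V)
  exact Nat.sInf_mem (s := {n | ∃ φ : Sym2 V → ℕ, IsAcyclicEdgeColoring G φ ∧
    ∀ e ∈ G.edgeSet, φ e < n}) ⟨n, fun e => eqv e,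
    isAcyclicEdgeColoring_of_injective G (Fin.val_injective.comp eqv.injective),
    fun e _ => (eqv e).isLt⟩

lemma acyclicChromaticIndex_le {G : SimpleGraph V} {φ : Sym2 V → ℕ} {κ : ℕ}
    (hφ : IsAcyclicEdgeColoring G φ) (hκ : ∀ e ∈ G.edgeSet, φ e < κ) :
    acyclicChromaticIndex G ≤ κ :=
  Nat.sInf_le ⟨φ, hφ, hκ⟩

lemma ncard_incidenceSet (G : SimpleGraph V) (x : V) : (G.incidenceSet x).ncard = vdeg G x := by
  classical
  rw [vdeg, ← Nat.card_coe_set_eq, ← Nat.card_coe_set_eq]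
  exact Nat.card_congr (G.incidenceSetEquivNeighborSet x)

lemma exists_lt_forall_incidenceSet_ne [Finite V] (G : SimpleGraph V) (φ : Sym2 V → ℕ)
    {x : V} {κ : ℕ} (hx : vdeg G x < κ) : ∃ β < κ, ∀ e ∈ G.incidenceSet x, φ e ≠ β := by
  by_contra! h
  have hsub : (Finset.range κ : Set ℕ) ⊆ φ '' G.incidenceSet x := fun β hβ =>
    h β (Finset.mem_range.1 hβ)
  refine hx.not_ge ?_
  calc
    κ = (Finset.range κ : Set ℕ).ncard := by simp
    _ ≤ (φ '' G.incidenceSet x).ncard := Set.ncard_le_ncard hsub (Set.toFinite _)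
    _ ≤ (G.incidenceSet x).ncard := Set.ncard_image_le (Set.toFinite _)
    _ = vdeg G x := ncard_incidenceSet G x

lemma vdeg_le_maxDeg [Finite V] (G : SimpleGraph V) (x : V) : vdeg G x ≤ maxDeg G :=
  le_csSup ⟨Nat.card V, by rintro _ ⟨y, rfl⟩; exact Set.ncard_le_card _⟩ ⟨x, rfl⟩

lemma eq_or_eq_of_mem_edgeSet_of_neighborSet_eq {G : SimpleGraph V} {v₀ u w : V}
    (hN : G.neighborSet v₀ = {u, w}) {e : Sym2 V} (he : e ∈ G.edgeSet) (hv : v₀ ∈ e) :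
    e = s(v₀, u) ∨ e = s(v₀, w) := by
  have hadj : G.Adj v₀ (Sym2.Mem.other hv) := by rwa [← mem_edgeSet, Sym2.other_spec hv]
  have : Sym2.Mem.other hv ∈ ({u, w} : Set V) := hN ▸ hadj
  rcases this with h | h <;> [left; right] <;> rw [← h, Sym2.other_spec hv]

lemma isMinor_of_connected_fibers {W : Type u₂} {V : Type u₁} {H : SimpleGraph W}
    {G : SimpleGraph V} (r : V → W) (hconn : ∀ a, (G.induce (r ⁻¹' {a})).Connected)
    (hadj : ∀ a b, H.Adj a b → ∃ x y, r x = a ∧ r y = b ∧ G.Adj x y) : IsMinor H G := by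
  refine ⟨fun a => r ⁻¹' {a}, fun a => ?_, hconn, fun a b hab => ?_, fun a b hab => ?_⟩
  · obtain ⟨⟨x, hx⟩⟩ := (hconn a).nonempty
    exact ⟨x, hx⟩
  · exact (Set.disjoint_singleton.2 hab).preimage r
  · obtain ⟨x, y, rfl, rfl, hxy⟩ := hadj a b hab
    exact ⟨x, rfl, y, rfl, hxy⟩

end Basic

namespace SimpleGraph.Walk

variable {V : Type u₁} {G : SimpleGraph V} {s : Set V}

lemma map_edges_induce : ∀ {a b : V} (p : G.Walk a b) (hp : ∀ x ∈ p.support, x ∈ s),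
    (p.induce s hp).edges.map (Sym2.map Subtype.val) = p.edges
  | _, _, .nil, _ => rfl
  | _, _, .cons _ p, hp => by simp [map_edges_induce p]

lemma isPath_induce_iff {a b : V} (p : G.Walk a b) (hp : ∀ x ∈ p.support, x ∈ s) :
    (p.induce s hp).IsPath ↔ p.IsPath := by
  simpa using isPath_map_iff_of_injective (f := (Embedding.induce s).toHom) (p := p.induce s hp)
    Subtype.val_injective |>.symm

lemma isCycle_induce_iff {a : V} (p : G.Walk a a) (hp : ∀ x ∈ p.support, x ∈ s) :
    (p.induce s hp).IsCycle ↔ p.IsCycle := by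
  simpa using isCycle_map_iff_of_injective (f := (Embedding.induce s).toHom) (p := p.induce s hp)
    Subtype.val_injective |>.symm

lemma IsCycle.exists_isPath_of_mem_support {a : V} {c : G.Walk a a} (hc : c.IsCycle) {v : V}
    (hv : v ∈ c.support) :
    ∃ y z, y ≠ z ∧ s(v, y) ∈ c.edges ∧ s(v, z) ∈ c.edges ∧
      ∃ q : G.Walk z y, q.IsPath ∧ v ∉ q.support ∧ q.edges ⊆ c.edges := by
  classical
  have hrot := hc.rotate hv
  obtain ⟨y, hy, p, hp⟩ := not_nil_iff.1 hrot.not_nil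
  rw [hp, cons_isCycle_iff] at hrot
  obtain ⟨hpath, hvy⟩ := hrot
  obtain ⟨z, hz, q, hq⟩ := exists_eq_cons_of_ne hy.ne p.reverse
  have hqpath := hpath.reverse
  rw [hq, cons_isPath_iff] at hqpath
  have hp_edges : ∀ e, e ∈ p.edges ↔ e = s(v, z) ∨ e ∈ q.edges := fun e => by
    rw [← List.mem_reverse, ← edges_reverse, hq, edges_cons, List.mem_cons]
  have hc_edges : ∀ e, e ∈ c.edges ↔ e = s(v, y) ∨ e ∈ p.edges := fun e => by
    rw [← (rotate_edges c v hv).perm.mem_iff, hp, edges_cons, List.mem_cons]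
  refine ⟨y, z, ?_, ?_, ?_, q, hqpath.1, hqpath.2, fun e he => ?_⟩
  · rintro rfl
    exact hvy ((hp_edges _).2 (Or.inl rfl))
  · exact (hc_edges _).2 (Or.inl rfl)
  · exact (hc_edges _).2 (Or.inr ((hp_edges _).2 (Or.inl rfl)))
  · exact (hc_edges _).2 (Or.inr ((hp_edges _).2 (Or.inr he)))

lemma IsCycle.exists_isPath_of_neighborSet_eq {v₀ u w a : V} (hN : G.neighborSet v₀ = {u, w})
    {c : G.Walk a a} (hc : c.IsCycle) (hv : v₀ ∈ c.support) :
    ∃ q : G.Walk u w, q.IsPath ∧ v₀ ∉ q.support ∧ s(v₀, u) ∈ c.edges ∧ q.edges ⊆ c.edges := by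
  obtain ⟨y, z, hyz, hy, hz, q, hq, hqv, hqc⟩ := hc.exists_isPath_of_mem_support hv
  have hy' : y ∈ ({u, w} : Set V) := hN ▸ c.adj_of_mem_edges hy
  have hz' : z ∈ ({u, w} : Set V) := hN ▸ c.adj_of_mem_edges hz
  rcases hy' with rfl | rfl <;> rcases hz' with rfl | rfl
  · exact absurd rfl hyz
  · exact ⟨q.reverse, hq.reverse, by simpa using hqv, hy, by simpa using hqc⟩
  · exact ⟨q, hq, hqv, hz, hqc⟩
  · exact absurd rfl hyz

end SimpleGraph.Walk

section Collapse

variable {V : Type u₁} {v₀ u w : V}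

open Classical in
noncomputable def collapse (v₀ w : V) (hw : w ≠ v₀) (x : V) : ({v₀}ᶜ : Set V) :=
  if hx : x = v₀ then ⟨w, hw⟩ else ⟨x, hx⟩

lemma collapse_self (hw : w ≠ v₀) : collapse v₀ w hw v₀ = ⟨w, hw⟩ := by
  rw [collapse, dif_pos rfl]

lemma collapse_of_ne (hw : w ≠ v₀) {x : V} (hx : x ≠ v₀) : collapse v₀ w hw x = ⟨x, hx⟩ := by
  rw [collapse, dif_neg hx]

lemma collapse_coe (hw : w ≠ v₀) (x : ({v₀}ᶜ : Set V)) : collapse v₀ w hw x = x :=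
  collapse_of_ne hw x.2

lemma collapse_preimage_self (hw : w ≠ v₀) : collapse v₀ w hw ⁻¹' {⟨w, hw⟩} = {w, v₀} := by
  ext x
  by_cases hx : x = v₀
  · simp [hx, collapse_self]
  · simp [hx, collapse_of_ne hw hx, Subtype.ext_iff]

lemma collapse_preimage_of_ne (hw : w ≠ v₀) {a : ({v₀}ᶜ : Set V)} (ha : (a : V) ≠ w) :
    collapse v₀ w hw ⁻¹' {a} = {(a : V)} := by
  ext x
  by_cases hx : x = v₀
  · simp [hx, collapse_self, Subtype.ext_iff, Ne.symm ha, Ne.symm a.2]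
  · simp [collapse_of_ne hw hx, Subtype.ext_iff]

lemma map_val_map_collapse (hw : w ≠ v₀) {e : Sym2 V} (he : v₀ ∉ e) :
    (e.map (collapse v₀ w hw)).map Subtype.val = e := by
  induction e using Sym2.ind with
  | _ a b =>
    simp only [Sym2.mem_iff, not_or] at he
    simp [collapse_of_ne hw (Ne.symm he.1), collapse_of_ne hw (Ne.symm he.2)]

lemma map_collapse_self_left (hw : w ≠ v₀) (hu : u ≠ v₀) :
    s(v₀, u).map (collapse v₀ w hw) = s(⟨w, hw⟩, ⟨u, hu⟩) := by
  rw [Sym2.map_mk, collapse_self, collapse_of_ne hw hu]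

end Collapse

section Smoothing

variable {V : Type u₁} {G : SimpleGraph V} {v₀ u w : V}

lemma adj_induce_compl_sup_edge (huw : u ≠ w) (hu : u ≠ v₀) (hw : w ≠ v₀) :
    ((G ⊔ edge u w).induce {v₀}ᶜ).Adj ⟨w, hw⟩ ⟨u, hu⟩ := by
  rw [induce_adj, sup_adj, edge_adj]
  exact Or.inr ⟨Or.inr ⟨rfl, rfl⟩, huw.symm⟩

lemma isMinor_induce_compl_sup_edge (hvu : G.Adj v₀ u) (hvw : G.Adj v₀ w) :
    IsMinor ((G ⊔ edge u w).induce {v₀}ᶜ) G := by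
  refine isMinor_of_connected_fibers (collapse v₀ w hvw.ne.symm) (fun a => ?_) ?_
  · by_cases ha : (a : V) = w
    · obtain rfl : a = ⟨w, hvw.ne.symm⟩ := Subtype.ext ha
      rw [collapse_preimage_self]
      exact induce_pair_connected_of_adj hvw.symm
    · rw [collapse_preimage_of_ne _ ha, induce_singleton_eq_top]
      exact connected_top
  · intro a b hab
    rw [induce_adj, sup_adj, edge_adj] at hab
    rcases hab with hab | ⟨hab | hab, -⟩
    · exact ⟨a, b, collapse_coe _ a, collapse_coe _ b, hab⟩
    · refine ⟨a, v₀, collapse_coe _ a, ?_, hab.1 ▸ hvu.symm⟩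
      rw [collapse_self]; exact Subtype.ext hab.2.symm
    · refine ⟨v₀, b, ?_, collapse_coe _ b, hab.2 ▸ hvu⟩
      rw [collapse_self]; exact Subtype.ext hab.1.symm

lemma not_nonempty_iso_of_compl_singleton [Finite V] (G' : SimpleGraph ({v₀}ᶜ : Set V))
    (G : SimpleGraph V) : ¬ Nonempty (G' ≃g G) := fun ⟨e⟩ =>
  (Finite.card_subtype_lt (p := (· ∈ ({v₀}ᶜ : Set V))) (x := v₀) (by simp)).ne
    (Nat.card_congr e.toEquiv)

lemma vdeg_induce_compl_sup_edge_le [Finite V] (hvu : G.Adj v₀ u) (hvw : G.Adj v₀ w)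
    (x : ({v₀}ᶜ : Set V)) : vdeg ((G ⊔ edge u w).induce {v₀}ᶜ) x ≤ vdeg G x := by
  classical
  -- a neighbour gained through the new edge `uw` is sent to `v₀`, the neighbour lost with `v₀`
  refine Set.ncard_le_ncard_of_injOn (fun y => if G.Adj x y then (y : V) else v₀) ?_ ?_
    (Set.toFinite _)
  · intro y hy
    simp only [mem_neighborSet, induce_adj, sup_adj, edge_adj] at hy
    by_cases hxy : G.Adj x y
    · simp [hxy]
    · simp only [hxy, if_false, mem_neighborSet]
      grind [Adj.symm]
  · intro y₁ hy₁ y₂ hy₂ h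
    simp only [mem_neighborSet, induce_adj, sup_adj, edge_adj] at hy₁ hy₂
    have h₁ : (y₁ : V) ≠ v₀ := y₁.2
    have h₂ : (y₂ : V) ≠ v₀ := y₂.2
    dsimp only at h
    split_ifs at h <;> grind

lemma maxDeg_induce_compl_sup_edge_le [Finite V] (hvu : G.Adj v₀ u) (hvw : G.Adj v₀ w) :
    maxDeg ((G ⊔ edge u w).induce {v₀}ᶜ) ≤ maxDeg G :=
  csSup_le' <| by
    rintro _ ⟨x, rfl⟩
    exact (vdeg_induce_compl_sup_edge_le hvu hvw x).trans (vdeg_le_maxDeg G x)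

lemma mapsTo_map_collapse (hN : G.neighborSet v₀ = {u, w}) (huw : u ≠ w) (hw : w ≠ v₀) :
    Set.MapsTo (Sym2.map (collapse v₀ w hw)) (G.edgeSet \ {s(v₀, w)})
      ((G ⊔ edge u w).induce {v₀}ᶜ).edgeSet := by
  rintro e ⟨he, hne⟩
  by_cases hv : v₀ ∈ e
  · obtain rfl := (eq_or_eq_of_mem_edgeSet_of_neighborSet_eq hN he hv).resolve_right hne
    rw [map_collapse_self_left hw (G.ne_of_adj he).symm, mem_edgeSet]
    exact adj_induce_compl_sup_edge huw _ hw
  · rw [← (Embedding.induce {v₀}ᶜ).map_mem_edgeSet_iff]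
    rw [← map_val_map_collapse hw hv] at he
    exact edgeSet_mono le_sup_left he

lemma injOn_map_collapse (hN : G.neighborSet v₀ = {u, w}) (hnadj : ¬ G.Adj u w)
    (hw : w ≠ v₀) : Set.InjOn (Sym2.map (collapse v₀ w hw)) (G.edgeSet \ {s(v₀, w)}) := by
  have hu : u ≠ v₀ := (G.ne_of_adj (show u ∈ G.neighborSet v₀ from hN ▸ Or.inl rfl)).symm
  have key : ∀ e ∈ G.edgeSet \ {s(v₀, w)},
      v₀ ∈ e ↔ e.map (collapse v₀ w hw) = s(⟨w, hw⟩, ⟨u, hu⟩) := by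
    rintro e ⟨he, hne⟩
    refine ⟨fun hv => ?_, fun h => by_contra fun hv => hnadj ?_⟩
    · rw [(eq_or_eq_of_mem_edgeSet_of_neighborSet_eq hN he hv).resolve_right hne,
        map_collapse_self_left hw hu]
    · rw [← map_val_map_collapse hw hv, h] at he
      exact (mem_edgeSet G).1 he |>.symm
  intro e₁ h₁ e₂ h₂ h
  by_cases hv : v₀ ∈ e₁
  · have hv₂ : v₀ ∈ e₂ := (key e₂ h₂).2 (h ▸ (key e₁ h₁).1 hv)
    rw [(eq_or_eq_of_mem_edgeSet_of_neighborSet_eq hN h₁.1 hv).resolve_right h₁.2,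
      (eq_or_eq_of_mem_edgeSet_of_neighborSet_eq hN h₂.1 hv₂).resolve_right h₂.2]
  · have hv₂ : v₀ ∉ e₂ := fun hv₂ => hv ((key e₁ h₁).2 (h.symm ▸ (key e₂ h₂).1 hv₂))
    rw [← map_val_map_collapse hw hv, h, map_val_map_collapse hw hv₂]

lemma mapsTo_map_collapse_incidenceSet (hN : G.neighborSet v₀ = {u, w}) (huw : u ≠ w)
    (hw : w ≠ v₀) (x : V) :
    Set.MapsTo (Sym2.map (collapse v₀ w hw)) (G.incidenceSet x \ {s(v₀, w)})
      (((G ⊔ edge u w).induce {v₀}ᶜ).incidenceSet (collapse v₀ w hw x)) :=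
  fun _ ⟨⟨he, hx⟩, hne⟩ =>
    ⟨mapsTo_map_collapse hN huw hw ⟨he, hne⟩, Sym2.mem_map.2 ⟨x, hx, rfl⟩⟩

end Smoothing

section LiftColoring

open SimpleGraph.Walk

variable {V : Type u₁} {G : SimpleGraph V} {v₀ u w : V} (hw : w ≠ v₀)

-- `v₀u` receives the colour of `uw`, since `collapse` maps it to `uw`.
open Classical in
noncomputable def liftColoring (φ : Sym2 ({v₀}ᶜ : Set V) → ℕ) (β : ℕ) (e : Sym2 V) : ℕ :=
  if e = s(v₀, w) then β else φ (e.map (collapse v₀ w hw))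

variable {hw} {φ : Sym2 ({v₀}ᶜ : Set V) → ℕ} {β : ℕ}

lemma liftColoring_of_ne {e : Sym2 V} (he : e ≠ s(v₀, w)) :
    liftColoring hw φ β e = φ (e.map (collapse v₀ w hw)) :=
  if_neg he

lemma liftColoring_map_val (e : Sym2 ({v₀}ᶜ : Set V)) :
    liftColoring hw φ β (e.map Subtype.val) = φ e := by
  have hv : v₀ ∉ e.map Subtype.val := fun h => by
    obtain ⟨x, -, hx⟩ := Sym2.mem_map.1 h
    exact x.2 hx
  have hne : e.map Subtype.val ≠ s(v₀, w) := fun h => hv (h ▸ Sym2.mem_mk_left v₀ w)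
  rw [liftColoring_of_ne hne, Sym2.map_map]
  simp [collapse_coe]

lemma liftColoring_self_left (huw : u ≠ w) (hu : u ≠ v₀) :
    liftColoring hw φ β s(v₀, u) = φ s(⟨w, hw⟩, ⟨u, hu⟩) := by
  rw [liftColoring_of_ne (by simp [huw, hw.symm]), map_collapse_self_left]

lemma liftColoring_lt (hN : G.neighborSet v₀ = {u, w}) (huw : u ≠ w) {κ : ℕ}
    (hφ : ∀ e ∈ ((G ⊔ edge u w).induce {v₀}ᶜ).edgeSet, φ e < κ) (hβ : β < κ) :
    ∀ e ∈ G.edgeSet, liftColoring hw φ β e < κ := by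
  intro e he
  by_cases hne : e = s(v₀, w)
  · rwa [liftColoring, if_pos hne]
  · rw [liftColoring_of_ne hne]
    exact hφ _ (mapsTo_map_collapse hN huw hw ⟨he, hne⟩)

lemma isProperEdgeColoring_liftColoring (hN : G.neighborSet v₀ = {u, w}) (huw : u ≠ w)
    (hnadj : ¬ G.Adj u w) (hφ : IsProperEdgeColoring ((G ⊔ edge u w).induce {v₀}ᶜ) φ)
    (hβ : ∀ e ∈ ((G ⊔ edge u w).induce {v₀}ᶜ).incidenceSet ⟨w, hw⟩, φ e ≠ β) :
    IsProperEdgeColoring G (liftColoring hw φ β) := by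
  refine isProperEdgeColoring_iff_injOn.2 fun x => ?_
  have hinj : Set.InjOn (liftColoring hw φ β) (G.incidenceSet x \ {s(v₀, w)}) := by
    refine Set.InjOn.congr ?_ fun e he => (liftColoring_of_ne he.2).symm
    exact (isProperEdgeColoring_iff_injOn.1 hφ _).comp ((injOn_map_collapse hN hnadj hw).mono
      (Set.sdiff_subset_sdiff_left (G.incidenceSet_subset x)))
      (mapsTo_map_collapse_incidenceSet hN huw hw x)
  by_cases hx : s(v₀, w) ∈ G.incidenceSet x
  · have hwx : collapse v₀ w hw x = ⟨w, hw⟩ := by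
      rcases Sym2.mem_iff.1 hx.2 with rfl | rfl
      · exact collapse_self hw
      · exact collapse_of_ne hw hw
    rw [← Set.insert_sdiff_self_of_mem hx, Set.injOn_insert (by simp)]
    refine ⟨hinj, fun ⟨e, he, hβe⟩ => hβ (e.map (collapse v₀ w hw)) ?_ ?_⟩
    · exact hwx ▸ mapsTo_map_collapse_incidenceSet hN huw hw x he
    · rwa [liftColoring_of_ne he.2, liftColoring, if_pos rfl] at hβe
  · rwa [← Set.sdiff_singleton_eq_self hx]

lemma three_le_card_liftColoring_of_notMem_support
    (hφ : IsAcyclicEdgeColoring ((G ⊔ edge u w).induce {v₀}ᶜ) φ) {a : V} {c : G.Walk a a}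
    (hc : c.IsCycle) (hv : v₀ ∉ c.support) :
    3 ≤ (c.edges.map (liftColoring hw φ β)).toFinset.card := by
  have hs : ∀ y ∈ (c.mapLe (le_sup_left : G ≤ G ⊔ edge u w)).support, y ∈ ({v₀}ᶜ : Set V) := by
    rw [support_mapLe_eq_support]
    exact fun y hy h => hv (h ▸ hy)
  have hc' := (isCycle_induce_iff _ hs).2 ((isCycle_mapLe _).2 hc)
  have hcolors : c.edges.map (liftColoring hw φ β) =
      ((c.mapLe le_sup_left).induce {v₀}ᶜ hs).edges.map φ := by
    rw [← edges_mapLe_eq_edges le_sup_left c, ← map_edges_induce _ hs, List.map_map]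
    exact List.map_congr_left fun e _ => liftColoring_map_val e
  rw [hcolors]
  exact hφ.2 _ _ hc'

lemma three_le_card_liftColoring_of_mem_support (hN : G.neighborSet v₀ = {u, w})
    (huw : u ≠ w) (hnadj : ¬ G.Adj u w)
    (hφ : IsAcyclicEdgeColoring ((G ⊔ edge u w).induce {v₀}ᶜ) φ) {a : V} {c : G.Walk a a}
    (hc : c.IsCycle) (hv : v₀ ∈ c.support) :
    3 ≤ (c.edges.map (liftColoring hw φ β)).toFinset.card := by
  obtain ⟨q, hq, hqv, hvu, hqc⟩ := hc.exists_isPath_of_neighborSet_eq hN hv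
  have hu : u ≠ v₀ := fun h => hqv (h ▸ q.start_mem_support)
  have hs : ∀ y ∈ (q.mapLe (le_sup_left : G ≤ G ⊔ edge u w)).support, y ∈ ({v₀}ᶜ : Set V) := by
    rw [support_mapLe_eq_support]
    exact fun y hy h => hqv (h ▸ hy)
  set q' := (q.mapLe le_sup_left).induce {v₀}ᶜ hs
  have hq'e : q'.edges.map (Sym2.map Subtype.val) = q.edges := by
    rw [map_edges_induce, edges_mapLe_eq_edges]
  have hwu := adj_induce_compl_sup_edge (G := G) huw hu hw
  have hC : (cons hwu q').IsCycle := by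
    rw [cons_isCycle_iff, isPath_induce_iff, isPath_mapLe]
    refine ⟨hq, fun h => hnadj (q.adj_of_mem_edges ?_).symm⟩
    exact hq'e ▸ List.mem_map_of_mem h
  refine (hφ.2 _ _ hC).trans (Finset.card_le_card fun n hn => ?_)
  simp only [List.mem_toFinset, List.mem_map, edges_cons, List.mem_cons] at hn ⊢
  obtain ⟨e, rfl | he, rfl⟩ := hn
  · exact ⟨s(v₀, u), hvu, liftColoring_self_left huw hu⟩
  · exact ⟨e.map Subtype.val, hqc (hq'e ▸ List.mem_map_of_mem he), liftColoring_map_val e⟩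

lemma isAcyclicEdgeColoring_liftColoring (hN : G.neighborSet v₀ = {u, w}) (huw : u ≠ w)
    (hnadj : ¬ G.Adj u w) (hφ : IsAcyclicEdgeColoring ((G ⊔ edge u w).induce {v₀}ᶜ) φ)
    (hβ : ∀ e ∈ ((G ⊔ edge u w).induce {v₀}ᶜ).incidenceSet ⟨w, hw⟩, φ e ≠ β) :
    IsAcyclicEdgeColoring G (liftColoring hw φ β) := by
  refine ⟨isProperEdgeColoring_liftColoring hN huw hnadj hφ.1 hβ, fun a c hc => ?_⟩
  by_cases hv : v₀ ∈ c.support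
  · exact three_le_card_liftColoring_of_mem_support hN huw hnadj hφ hc hv
  · exact three_le_card_liftColoring_of_notMem_support hφ hc hv

end LiftColoring

/-- If `G` is `κ`-minimal with `κ ≥ Δ(G) + 1` and `v₀` has degree 2,
then `v₀` is contained in a triangle. -/
theorem kMinimal_degree_two_in_triangle {V : Type u₁} [Fintype V]
    (G : SimpleGraph V) (κ : ℕ) (h : KMinimal G κ) (hκ : maxDeg G + 1 ≤ κ)
    (v₀ : V) (hv₀ : vdeg G v₀ = 2) :
    ∃ a b : V, G.Adj v₀ a ∧ G.Adj v₀ b ∧ G.Adj a b := by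
  by_contra! htri
  obtain ⟨u, w, huw, hN⟩ := Set.ncard_eq_two.1 hv₀
  have hvu : u ∈ G.neighborSet v₀ := hN ▸ Set.mem_insert u {w}
  have hvw : w ∈ G.neighborSet v₀ := hN ▸ Set.mem_insert_of_mem u rfl
  have hw : w ≠ v₀ := hvw.ne.symm
  set H := (G ⊔ edge u w).induce {v₀}ᶜ
  have hH : acyclicChromaticIndex H ≤ κ := h.2.2 _ H
    ⟨isMinor_induce_compl_sup_edge hvu hvw, not_nonempty_iso_of_compl_singleton H G⟩
    (maxDeg_induce_compl_sup_edge_le hvu hvw)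
  obtain ⟨φ, hφ, hφκ⟩ := exists_isAcyclicEdgeColoring_lt_acyclicChromaticIndex H
  have hdeg_w : vdeg H ⟨w, hw⟩ < κ :=
    ((vdeg_induce_compl_sup_edge_le hvu hvw _).trans (vdeg_le_maxDeg G w)).trans_lt hκ
  obtain ⟨β, hβκ, hβ⟩ := exists_lt_forall_incidenceSet_ne H φ hdeg_w
  exact h.2.1.not_ge <| acyclicChromaticIndex_le
    (isAcyclicEdgeColoring_liftColoring hN huw (htri u w hvu hvw) hφ hβ)
    (liftColoring_lt hN huw (fun e he => (hφκ e he).trans_le hH) hβκ)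
end

section
/- Let G be a κ-deletion-minimal graph, uv an edge of G, and φ an acyclic edge coloring of G − uv with colors from {1,…,κ}. If the set U(u) of colors appearing on edges incident with u is disjoint from the set U(v) of colors appearing on edges incident with v, then deg_G(u) + deg_G(v) = κ + 2. -/
open SimpleGraph

universe u₁ u₂

/-!
Colour `uv` with a colour `c` missing from both `U(u)` and `U(v)`. The colouring stays proper,
and every cycle through `uv` also uses an edge at `u` and an edge at `v` other than `uv`; their
colours lie in the disjoint sets `U(u)` and `U(v)`, so together with `c` the cycle sees three
colours. This would give `χ'ₐ(G) ≤ κ`, so no such `c < κ` exists: `U(u) ∪ U(v) = {0, …, κ-1}`.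
Since a proper colouring is injective on the edges at a vertex, `|U(u)| = deg_G(u) - 1` and
`|U(v)| = deg_G(v) - 1`, and disjointness gives the degree sum.
-/

namespace SimpleGraph

variable {V : Type u₁} {G H : SimpleGraph V} {φ : Sym2 V → ℕ}

/-- The set `U_φ(x)` of colours on the edges of `H` at `x`. -/
def colorsAt (H : SimpleGraph V) (φ : Sym2 V → ℕ) (x : V) : Set ℕ :=
  {c | ∃ e ∈ H.edgeSet, x ∈ e ∧ φ e = c}

theorem colorsAt_eq_image (H : SimpleGraph V) (φ : Sym2 V → ℕ) (x : V) :
    colorsAt H φ x = (fun y => φ s(x, y)) '' H.neighborSet x := by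
  ext c
  constructor
  · rintro ⟨e, he, hxe, rfl⟩
    obtain ⟨y, rfl⟩ := Sym2.mem_iff_exists.mp hxe
    exact ⟨y, he, rfl⟩
  · rintro ⟨y, hy, rfl⟩
    exact ⟨s(x, y), hy, Sym2.mem_mk_left x y, rfl⟩

theorem colorsAt_subset_Iio {κ : ℕ} (hcol : ∀ e ∈ H.edgeSet, φ e < κ) (x : V) :
    colorsAt H φ x ⊆ Set.Iio κ := by
  rintro c ⟨e, he, -, rfl⟩
  exact hcol e he

theorem mem_edgeSet_deleteEdges_singleton {e e₀ : Sym2 V} (he : e ∈ G.edgeSet) (hne : e ≠ e₀) :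
    e ∈ (G.deleteEdges {e₀}).edgeSet := by
  rw [edgeSet_deleteEdges]
  exact ⟨he, hne⟩

theorem neighborSet_deleteEdges_singleton (x y : V) :
    (G.deleteEdges {s(x, y)}).neighborSet x = G.neighborSet x \ {y} := by
  ext z
  simp only [mem_neighborSet, deleteEdges_adj, Set.mem_singleton_iff, Set.mem_sdiff,
    Sym2.congr_right]

theorem IsProperEdgeColoring.injOn_neighborSet (hφ : IsProperEdgeColoring H φ) (x : V) :
    (H.neighborSet x).InjOn (fun y => φ s(x, y)) := by
  intro y₁ hy₁ y₂ hy₂ hc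
  by_contra hne
  exact hφ _ hy₁ _ hy₂ (fun h => hne (Sym2.congr_right.mp h))
    ⟨x, Sym2.mem_mk_left x y₁, Sym2.mem_mk_left x y₂⟩ hc

theorem IsProperEdgeColoring.ncard_colorsAt (hφ : IsProperEdgeColoring H φ) (x : V) :
    (colorsAt H φ x).ncard = vdeg H x := by
  rw [colorsAt_eq_image, (hφ.injOn_neighborSet x).ncard_image, vdeg]

theorem IsProperEdgeColoring.finite_neighborSet (hφ : IsProperEdgeColoring H φ) {x : V}
    (hfin : (colorsAt H φ x).Finite) : (H.neighborSet x).Finite :=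
  Set.Finite.of_finite_image (colorsAt_eq_image H φ x ▸ hfin) (hφ.injOn_neighborSet x)

theorem vdeg_eq_vdeg_deleteEdges_add_one {x y : V} (hxy : G.Adj x y)
    (hfin : ((G.deleteEdges {s(x, y)}).neighborSet x).Finite) :
    vdeg G x = vdeg (G.deleteEdges {s(x, y)}) x + 1 := by
  rw [neighborSet_deleteEdges_singleton] at hfin
  rw [vdeg, vdeg, neighborSet_deleteEdges_singleton,
    Set.ncard_sdiff_singleton_add_one (show y ∈ G.neighborSet x from hxy)
      (hfin.of_sdiff (Set.toFinite _))]

theorem IsProperEdgeColoring.vdeg_eq_ncard_colorsAt_add_one {e : Sym2 V} {x : V}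
    (hφ : IsProperEdgeColoring (G.deleteEdges {e}) φ) (he : e ∈ G.edgeSet) (hx : x ∈ e)
    (hfin : (colorsAt (G.deleteEdges {e}) φ x).Finite) :
    vdeg G x = (colorsAt (G.deleteEdges {e}) φ x).ncard + 1 := by
  obtain ⟨y, rfl⟩ := Sym2.mem_iff_exists.mp hx
  rw [hφ.ncard_colorsAt]
  exact vdeg_eq_vdeg_deleteEdges_add_one he (hφ.finite_neighborSet hfin)

theorem Walk.IsCycle.exists_ne_mem_edges {w : V} {c : G.Walk w w} (hc : c.IsCycle) {x y : V}
    (hxy : s(x, y) ∈ c.edges) : ∃ z, z ≠ y ∧ s(x, z) ∈ c.edges := by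
  have htwo := hc.ncard_neighborSet_toSubgraph_eq_two (c.fst_mem_support_of_mem_edges hxy)
  obtain ⟨z, hz, hzy⟩ := Set.exists_ne_of_one_lt_ncard
    (s := c.toSubgraph.neighborSet x) (by omega) y
  exact ⟨z, hzy, Walk.adj_toSubgraph_iff_mem_edges.mp hz⟩

theorem acyclicChromaticIndex_le_of_isAcyclicEdgeColoring {n : ℕ}
    (hφ : IsAcyclicEdgeColoring G φ) (hcol : ∀ e ∈ G.edgeSet, φ e < n) :
    acyclicChromaticIndex G ≤ n :=
  Nat.sInf_le ⟨φ, hφ, hcol⟩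

section FreeColor

variable [DecidableEq V] {u v : V} {c : ℕ}

theorem IsProperEdgeColoring.update_of_notMem_colorsAt
    (hφ : IsProperEdgeColoring (G.deleteEdges {s(u, v)}) φ)
    (hu : c ∉ colorsAt (G.deleteEdges {s(u, v)}) φ u)
    (hv : c ∉ colorsAt (G.deleteEdges {s(u, v)}) φ v) :
    IsProperEdgeColoring G (Function.update φ s(u, v) c) := by
  have hfree : ∀ e ∈ G.edgeSet, e ≠ s(u, v) → ∀ x ∈ s(u, v), x ∈ e → φ e ≠ c := by
    intro e he hne x hx hxe hc
    have he' := mem_edgeSet_deleteEdges_singleton he hne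
    rcases Sym2.mem_iff.mp hx with rfl | rfl
    · exact hu ⟨e, he', hxe, hc⟩
    · exact hv ⟨e, he', hxe, hc⟩
  rintro e₁ h₁ e₂ h₂ hne ⟨x, hx₁, hx₂⟩
  by_cases he₁ : e₁ = s(u, v) <;> by_cases he₂ : e₂ = s(u, v)
  · exact absurd (he₁.trans he₂.symm) hne
  · subst he₁
    rw [Function.update_self, Function.update_of_ne he₂]
    exact (hfree e₂ h₂ he₂ x hx₁ hx₂).symm
  · subst he₂
    rw [Function.update_self, Function.update_of_ne he₁]
    exact hfree e₁ h₁ he₁ x hx₂ hx₁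
  · rw [Function.update_of_ne he₁, Function.update_of_ne he₂]
    exact hφ e₁ (mem_edgeSet_deleteEdges_singleton h₁ he₁)
      e₂ (mem_edgeSet_deleteEdges_singleton h₂ he₂) hne ⟨x, hx₁, hx₂⟩

theorem IsAcyclicEdgeColoring.update_of_notMem_colorsAt
    (hφ : IsAcyclicEdgeColoring (G.deleteEdges {s(u, v)}) φ)
    (hdisj : Disjoint (colorsAt (G.deleteEdges {s(u, v)}) φ u)
      (colorsAt (G.deleteEdges {s(u, v)}) φ v))
    (hu : c ∉ colorsAt (G.deleteEdges {s(u, v)}) φ u)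
    (hv : c ∉ colorsAt (G.deleteEdges {s(u, v)}) φ v) :
    IsAcyclicEdgeColoring G (Function.update φ s(u, v) c) := by
  refine ⟨hφ.1.update_of_notMem_colorsAt hu hv, fun x w hw => ?_⟩
  by_cases huv : s(u, v) ∈ w.edges
  · obtain ⟨a, hav, ha⟩ := hw.exists_ne_mem_edges huv
    obtain ⟨b, hbu, hb⟩ := hw.exists_ne_mem_edges (Sym2.eq_swap ▸ huv)
    have hua : s(u, a) ≠ s(u, v) := fun h => hav (Sym2.congr_right.mp h)
    have hvb : s(v, b) ≠ s(u, v) := fun h => hbu (Sym2.congr_right.mp (h.trans Sym2.eq_swap))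
    have hau : φ s(u, a) ∈ colorsAt (G.deleteEdges {s(u, v)}) φ u :=
      ⟨_, mem_edgeSet_deleteEdges_singleton (w.edges_subset_edgeSet ha) hua,
        Sym2.mem_mk_left u a, rfl⟩
    have hbv : φ s(v, b) ∈ colorsAt (G.deleteEdges {s(u, v)}) φ v :=
      ⟨_, mem_edgeSet_deleteEdges_singleton (w.edges_subset_edgeSet hb) hvb,
        Sym2.mem_mk_left v b, rfl⟩
    have hthree : ({c, φ s(u, a), φ s(v, b)} : Finset ℕ).card = 3 :=
      Finset.card_eq_three.mpr ⟨_, _, _, fun h => hu (by rwa [h]), fun h => hv (by rwa [h]),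
        fun h => Set.disjoint_left.mp hdisj hau (by rwa [h]), rfl⟩
    rw [← hthree]
    refine Finset.card_le_card fun d hd => ?_
    simp only [Finset.mem_insert, Finset.mem_singleton] at hd
    simp only [List.mem_toFinset, List.mem_map]
    rcases hd with rfl | rfl | rfl
    · exact ⟨_, huv, Function.update_self _ _ _⟩
    · exact ⟨_, ha, Function.update_of_ne hua _ _⟩
    · exact ⟨_, hb, Function.update_of_ne hvb _ _⟩
  · have hp : ∀ e ∈ w.edges, e ∉ ({s(u, v)} : Set (Sym2 V)) := fun e he h =>
      huv (Set.mem_singleton_iff.mp h ▸ he)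
    have h3 := hφ.2 x (w.toDeleteEdges _ hp) (Walk.IsCycle.toDeleteEdges _ _ hw hp)
    rw [Walk.edges_transfer] at h3
    rwa [List.map_congr_left fun e he =>
      Function.update_of_ne (fun h : e = s(u, v) => huv (h ▸ he)) c φ]

/-- A colour below `κ` missing at both ends of `uv` would extend `φ` to `G`. -/
theorem colorsAt_union_eq_Iio {κ : ℕ} (hG : κ < acyclicChromaticIndex G)
    (hφ : IsAcyclicEdgeColoring (G.deleteEdges {s(u, v)}) φ)
    (hcol : ∀ e ∈ (G.deleteEdges {s(u, v)}).edgeSet, φ e < κ)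
    (hdisj : Disjoint (colorsAt (G.deleteEdges {s(u, v)}) φ u)
      (colorsAt (G.deleteEdges {s(u, v)}) φ v)) :
    colorsAt (G.deleteEdges {s(u, v)}) φ u ∪ colorsAt (G.deleteEdges {s(u, v)}) φ v =
      Set.Iio κ := by
  refine (Set.union_subset (colorsAt_subset_Iio hcol u) (colorsAt_subset_Iio hcol v)).antisymm
    fun c hc => ?_
  by_contra hfree
  rw [Set.mem_union, not_or] at hfree
  refine hG.not_ge (acyclicChromaticIndex_le_of_isAcyclicEdgeColoring
    (hφ.update_of_notMem_colorsAt hdisj hfree.1 hfree.2) fun e he => ?_)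
  by_cases heuv : e = s(u, v)
  · rw [heuv, Function.update_self]
    exact hc
  · rw [Function.update_of_ne heuv]
    exact hcol e (mem_edgeSet_deleteEdges_singleton he heuv)

end FreeColor

end SimpleGraph

theorem deletionMinimal_disjoint_colors_degree_sum_general {V : Type u₁}
    (G : SimpleGraph V) (κ : ℕ) (h : DeletionMinimal G κ)
    (u v : V) (huv : G.Adj u v) (φ : Sym2 V → ℕ)
    (hφ : IsAcyclicEdgeColoring (G.deleteEdges {s(u, v)}) φ)
    (hcol : ∀ e ∈ (G.deleteEdges {s(u, v)}).edgeSet, φ e < κ)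
    (hdisj : Disjoint
      {c : ℕ | ∃ e ∈ (G.deleteEdges {s(u, v)}).edgeSet, u ∈ e ∧ φ e = c}
      {c : ℕ | ∃ e ∈ (G.deleteEdges {s(u, v)}).edgeSet, v ∈ e ∧ φ e = c}) :
    vdeg G u + vdeg G v = κ + 2 := by
  classical
  change Disjoint (colorsAt _ φ u) (colorsAt _ φ v) at hdisj
  have hfin : ∀ x, (colorsAt (G.deleteEdges {s(u, v)}) φ x).Finite := fun x =>
    (Set.finite_Iio κ).subset (colorsAt_subset_Iio hcol x)
  have hunion := congrArg Set.ncard (colorsAt_union_eq_Iio h.2.1 hφ hcol hdisj)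
  rw [Set.ncard_union_eq hdisj (hfin u) (hfin v), Set.ncard_Iio_nat] at hunion
  rw [hφ.1.vdeg_eq_ncard_colorsAt_add_one huv (Sym2.mem_mk_left u v) (hfin u),
    hφ.1.vdeg_eq_ncard_colorsAt_add_one huv (Sym2.mem_mk_right u v) (hfin v)]
  omega

/-- **Fact 2 (second part).** Let `G` be `κ`-deletion-minimal, `uv ∈ E(G)`, and `φ` an
acyclic edge coloring of `G - uv` with colors from `{0, …, κ-1}`. If the set of colors
at `u` is disjoint from the set of colors at `v`, then `deg_G(u) + deg_G(v) = κ + 2`. -/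
theorem deletionMinimal_disjoint_colors_degree_sum {V : Type u₁} [Fintype V]
    (G : SimpleGraph V) (κ : ℕ) (h : DeletionMinimal G κ)
    (u v : V) (huv : G.Adj u v) (φ : Sym2 V → ℕ)
    (hφ : IsAcyclicEdgeColoring (G.deleteEdges {s(u, v)}) φ)
    (hcol : ∀ e ∈ (G.deleteEdges {s(u, v)}).edgeSet, φ e < κ)
    (hdisj : Disjoint
      {c : ℕ | ∃ e ∈ (G.deleteEdges {s(u, v)}).edgeSet, u ∈ e ∧ φ e = c}
      {c : ℕ | ∃ e ∈ (G.deleteEdges {s(u, v)}).edgeSet, v ∈ e ∧ φ e = c}) :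
    vdeg G u + vdeg G v = κ + 2 :=
  deletionMinimal_disjoint_colors_degree_sum_general G κ h u v huv φ hφ hcol hdisj
end
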